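/- arXiv:1907.09898 — 11 statements merged into one kernel-verified Lean document; each statement's English description precedes it below -/
import Mathlib

section
/- Let X be a type with decidable equality and let T, C, C' be finite subsets (Finsets) of X with |T| = 3. If |T ∩ C| ∈ {0, 2} and |T ∩ C'| ∈ {0, 2}, then |T ∩ (C Δ C')| ∈ {0, 2}. (This is the closure of the set of admissible contours, those intersecting every triangle of a triangulation in either zero or exactly two edges, under symmetric difference.) -/
theorem stmt_2 {X : Type*} [DecidableEq X] (T C C' : Finset X)
    (hT : T.card = 3)
    (hC : (T ∩ C).card = 0 ∨ (T ∩ C).card = 2)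
    (hC' : (T ∩ C').card = 0 ∨ (T ∩ C').card = 2) :
    (T ∩ symmDiff C C').card = 0 ∨ (T ∩ symmDiff C C').card = 2 := by
  have h1 : T ∩ symmDiff C C' = symmDiff (T ∩ C) (T ∩ C') := inf_symmDiff_distrib_left T C C'
  set a := T ∩ C with ha
  set b := T ∩ C' with hb
  have hd : Disjoint (a \ b) (b \ a) := disjoint_sdiff_sdiff
  have h2 : (symmDiff a b).card = (a \ b).card + (b \ a).card := by
    rw [symmDiff_def, Finset.sup_eq_union, Finset.card_union_of_disjoint hd]
  have h3 : (a \ b).card + (a ∩ b).card = a.card := Finset.card_sdiff_add_card_inter a b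
  have h4 : (b \ a).card + (b ∩ a).card = b.card := Finset.card_sdiff_add_card_inter b a
  have h5 : (a ∩ b).card = (b ∩ a).card := by rw [Finset.inter_comm]
  have h6 : (T ∩ symmDiff C C').card ≤ T.card :=
    Finset.card_le_card (Finset.inter_subset_left)
  have h7 : (a ∩ b).card ≤ a.card := Finset.card_le_card Finset.inter_subset_left
  rw [h1, h2] at h6 ⊢
  omega
end

section
/- Let X be a type with decidable equality and A a unital star-ring. Suppose c : X → A satisfies the canonical anti-commutation relations R: c x * c x' + c x' * c x = 0 for all x, x', and (c x)* * c x' + c x' * (c x)* = 1 if x = x' and = 0 if x ≠ x'. Define γ x = c x + (c x)* and s x = (c x)* * c x − c x * (c x)*. Then the relations R' hold: (R'₁) s x * s x = 1 and s x * s x' = s x' * s x for all x, x'; (R'₂) γ x * γ x' + γ x' * γ x = 2·1 if x = x' and = 0 if x ≠ x'; (R'₃) s x * γ x' * s x = −γ x' if x = x' and = γ x' if x ≠ x'. Moreover γ x and s x are self-adjoint. -/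
theorem stmt_5 {X : Type*} [DecidableEq X] {A : Type*} [Ring A] [StarRing A]
    (c : X → A)
    (hR1 : ∀ x x' : X, c x * c x' + c x' * c x = 0)
    (hR2 : ∀ x x' : X,
      star (c x) * c x' + c x' * star (c x) = if x = x' then (1 : A) else 0)
    (γ s : X → A)
    (hγ : ∀ x : X, γ x = c x + star (c x))
    (hs : ∀ x : X, s x = star (c x) * c x - c x * star (c x)) :
    (∀ x : X, s x * s x = 1) ∧
    (∀ x x' : X, s x * s x' = s x' * s x) ∧
    (∀ x x' : X, γ x * γ x' + γ x' * γ x = if x = x' then (2 : A) * 1 else 0) ∧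
    (∀ x x' : X, s x * γ x' * s x = if x = x' then -γ x' else γ x') ∧
    (∀ x : X, star (γ x) = γ x) ∧
    (∀ x : X, star (s x) = s x) := by
  have h0 : ∀ x, c x * c x + c x * c x = 0 := fun x => hR1 x x
  have h1 : ∀ x, star (c x) * c x + c x * star (c x) = 1 := by
    intro x; simpa using hR2 x x
  have h0s : ∀ x, star (c x) * star (c x) + star (c x) * star (c x) = 0 := by
    intro x
    have := congrArg star (h0 x)
    simpa [star_add, star_mul] using this
  have L1 : ∀ x, c x * s x = c x := by
    intro x
    have key : c x * s x = c x * (star (c x) * c x + c x * star (c x))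
        - (c x * c x + c x * c x) * star (c x) := by
      rw [hs]; noncomm_ring
    rw [key, h1, h0, mul_one, zero_mul, sub_zero]
  have L2 : ∀ x, s x * c x = -c x := by
    intro x
    have key : s x * c x = star (c x) * (c x * c x + c x * c x)
        - (star (c x) * c x + c x * star (c x)) * c x := by
      rw [hs]; noncomm_ring
    rw [key, h1, h0, mul_zero, one_mul, zero_sub]
  have L3 : ∀ x, s x * star (c x) = star (c x) := by
    intro x
    have key : s x * star (c x) = (star (c x) * c x + c x * star (c x)) * star (c x)
        - c x * (star (c x) * star (c x) + star (c x) * star (c x)) := by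
      rw [hs]; noncomm_ring
    rw [key, h1, h0s, mul_zero, one_mul, sub_zero]
  have L4 : ∀ x, star (c x) * s x = -star (c x) := by
    intro x
    have key : star (c x) * s x = (star (c x) * star (c x) + star (c x) * star (c x)) * c x
        - star (c x) * (star (c x) * c x + c x * star (c x)) := by
      rw [hs]; noncomm_ring
    rw [key, h1, h0s, zero_mul, mul_one, zero_sub]
  have Gs1 : ∀ x, s x * s x = 1 := by
    intro x
    have e : s x * s x = (s x * star (c x)) * c x - (s x * c x) * star (c x) := by
      nth_rewrite 2 [hs x]; noncomm_ring
    rw [e, L3, L2, neg_mul, sub_neg_eq_add, h1]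
  have M1 : ∀ x x', x ≠ x' → Commute (s x) (c x') := by
    intro x x' hne
    have key : s x * c x' - c x' * s x =
        star (c x) * (c x * c x' + c x' * c x)
        - (star (c x) * c x' + c x' * star (c x)) * c x
        - c x * (star (c x) * c x' + c x' * star (c x))
        + (c x * c x' + c x' * c x) * star (c x) := by
      rw [hs]; noncomm_ring
    rw [hR1 x x', hR2 x x', if_neg hne] at key
    simp only [mul_zero, zero_mul, sub_zero, zero_sub, add_zero, neg_zero] at key
    exact (sub_eq_zero.mp key)
  have M2 : ∀ x x', x ≠ x' → Commute (s x) (star (c x')) := by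
    intro x x' hne
    have hC3 : c x * star (c x') + star (c x') * c x = 0 := by
      have := hR2 x' x
      rw [if_neg (Ne.symm hne)] at this
      rw [add_comm]; exact this
    have hC4 : star (c x) * star (c x') + star (c x') * star (c x) = 0 := by
      have := congrArg star (hR1 x' x)
      simpa [star_add, star_mul] using this
    have key : s x * star (c x') - star (c x') * s x =
        star (c x) * (c x * star (c x') + star (c x') * c x)
        - (star (c x) * star (c x') + star (c x') * star (c x)) * c x
        - c x * (star (c x) * star (c x') + star (c x') * star (c x))
        + (c x * star (c x') + star (c x') * c x) * star (c x) := by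
      rw [hs]; noncomm_ring
    rw [hC3, hC4] at key
    simp only [mul_zero, zero_mul, sub_zero, zero_sub, add_zero, neg_zero] at key
    exact (sub_eq_zero.mp key)
  refine ⟨Gs1, ?_, ?_, ?_, ?_, ?_⟩
  · intro x x'
    by_cases h : x = x'
    · subst h; rfl
    · have comm : Commute (s x) (s x') := by
        rw [hs x']
        exact ((M2 x x' h).mul_right (M1 x x' h)).sub_right
          ((M1 x x' h).mul_right (M2 x x' h))
      exact comm.eq
  · intro x x'
    by_cases h : x = x'
    · subst h
      rw [if_pos rfl]
      have key : γ x * γ x + γ x * γ x =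
          (c x * c x + c x * c x) + (star (c x) * star (c x) + star (c x) * star (c x))
          + ((star (c x) * c x + c x * star (c x)) + (star (c x) * c x + c x * star (c x))) := by
        rw [hγ]; noncomm_ring
      rw [key, h0, h0s, h1]; norm_num
    · rw [if_neg h]
      have hC2 : star (c x) * c x' + c x' * star (c x) = 0 := by
        have := hR2 x x'; rwa [if_neg h] at this
      have hC3 : c x * star (c x') + star (c x') * c x = 0 := by
        have := hR2 x' x
        rw [if_neg (Ne.symm h)] at this
        rw [add_comm]; exact this
      have hC4 : star (c x) * star (c x') + star (c x') * star (c x) = 0 := by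
        have := congrArg star (hR1 x' x)
        simpa [star_add, star_mul] using this
      have key : γ x * γ x' + γ x' * γ x =
          (c x * c x' + c x' * c x) + (star (c x) * c x' + c x' * star (c x))
          + (c x * star (c x') + star (c x') * c x)
          + (star (c x) * star (c x') + star (c x') * star (c x)) := by
        rw [hγ x, hγ x']; noncomm_ring
      rw [key, hR1 x x', hC2, hC3, hC4]; norm_num
  · intro x x'
    by_cases h : x = x'
    · subst h
      rw [if_pos rfl, hγ]
      have e : s x * (c x + star (c x)) * s x
          = (s x * c x) * s x + (s x * star (c x)) * s x := by noncomm_ring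
      rw [e, L2, L3, L4, neg_mul, L1, neg_add]
    · rw [if_neg h]
      have comm : s x * γ x' = γ x' * s x := by
        rw [hγ]
        exact ((M1 x x' h).add_right (M2 x x' h)).eq
      rw [comm, mul_assoc, Gs1, mul_one]
  · intro x
    rw [hγ]
    simp [add_comm]
  · intro x
    rw [hs]
    simp [star_sub, star_mul]
end

section
/- Let X be a type with decidable equality and A a unital star-algebra over ℂ. Suppose γ : X → A and s : X → A are self-adjoint elements satisfying the relations R': (R'₁) s x * s x = 1 and s x * s x' = s x' * s x for all x, x'; (R'₂) γ x * γ x' + γ x' * γ x = 2·1 if x = x' and = 0 if x ≠ x'; (R'₃) s x * γ x' * s x = −γ x' if x = x' and = γ x' if x ≠ x'. Define c x = (1/2) • (γ x * (1 + s x)). Then c satisfies the canonical anti-commutation relations: c x * c x' + c x' * c x = 0 for all x, x', and (c x)* * c x' + c x' * (c x)* = 1 if x = x' and = 0 if x ≠ x'. Moreover c x + (c x)* = γ x and (c x)* * c x − c x * (c x)* = s x. -/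
theorem auxL1' {A : Type*} [Ring A] (a u : A) (ha : a*a=1) (hu : u*u=1)
    (h : u*a = -(a*u)) : (a*(1+u))*(a*(1+u)) = 0 := by
  linear_combination (norm := noncomm_ring) a*h + a*h*u + ha - ha*(u*u) - hu

theorem auxL2' {A : Type*} [Ring A] (a u : A) (ha : a*a=1) (hu : u*u=1)
    (h : u*a = -(a*u)) : ((1+u)*a)*(a*(1+u)) + (a*(1+u))*((1+u)*a) = 1+1+1+1 := by
  linear_combination (norm := noncomm_ring) h*a + a*h + u*ha*u + a*hu*a + 3*ha + hu

theorem auxL3' {A : Type*} [Ring A] (a u : A) (ha : a*a=1) (hu : u*u=1)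
    (h : u*a = -(a*u)) : ((1+u)*a)*(a*(1+u)) - (a*(1+u))*((1+u)*a) = 4*u := by
  linear_combination (norm := noncomm_ring) h*a - 3*(a*h) + u*ha*u - a*hu*a + 4*ha*u - ha + hu

theorem auxL4' {A : Type*} [Ring A] (a u : A) (h : u*a = -(a*u)) :
    a*(1+u) + (1+u)*a = 2*a := by
  linear_combination (norm := noncomm_ring) h

theorem auxM1' {A : Type*} [Ring A] (a u b v : A) (hab : b*a = -(a*b))
    (hub : u*b = b*u) (hva : v*a = a*v) (huv : v*u = u*v) :
    (a*(1+u))*(b*(1+v)) + (b*(1+v))*(a*(1+u)) = 0 := by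
  linear_combination (norm := noncomm_ring) hab + a*hub + hab*u + b*hva + hab*v + a*hub*v + b*hva*u + hab*(v*u) - a*b*huv

theorem auxM2' {A : Type*} [Ring A] (a u b v : A) (hab : b*a = -(a*b))
    (hub : u*b = b*u) (hva : v*a = a*v) (huv : v*u = u*v) :
    ((1+u)*a)*(b*(1+v)) + (b*(1+v))*((1+u)*a) = 0 := by
  linear_combination (norm := noncomm_ring) hab + u*hab - hub*a + b*hva + hab*v + b*huv*a - hub*(v*a) + u*b*hva + u*hab*v

theorem stmt_6 {X : Type*} [DecidableEq X] {A : Type*} [Ring A] [Algebra ℂ A]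
    [StarRing A] [StarModule ℂ A]
    (γ s : X → A)
    (hγsa : ∀ x : X, star (γ x) = γ x)
    (hssa : ∀ x : X, star (s x) = s x)
    (hR1a : ∀ x : X, s x * s x = 1)
    (hR1b : ∀ x x' : X, s x * s x' = s x' * s x)
    (hR2 : ∀ x x' : X, γ x * γ x' + γ x' * γ x = if x = x' then (2 : A) * 1 else 0)
    (hR3 : ∀ x x' : X, s x * γ x' * s x = if x = x' then -γ x' else γ x')
    (c : X → A)
    (hc : ∀ x : X, c x = (1 / 2 : ℂ) • (γ x * (1 + s x))) :
    (∀ x x' : X, c x * c x' + c x' * c x = 0) ∧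
    (∀ x x' : X,
      star (c x) * c x' + c x' * star (c x) = if x = x' then (1 : A) else 0) ∧
    (∀ x : X, c x + star (c x) = γ x) ∧
    (∀ x : X, star (c x) * c x - c x * star (c x) = s x) := by
  -- γ x squares to 1
  have ha2 : ∀ x, γ x * γ x = 1 := by
    intro x
    have h := hR2 x x
    rw [if_pos rfl, two_mul] at h
    have h2 : (2:ℂ) • (γ x * γ x) = (2:ℂ) • (1:A) := by
      rw [two_smul, two_smul, h]
    have h3 := congrArg (((2:ℂ)⁻¹) • ·) h2
    simp only [smul_smul] at h3
    norm_num at h3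
    exact h3
  -- s x anticommutes with γ x
  have hanti : ∀ x, s x * γ x = -(γ x * s x) := by
    intro x
    have h := hR3 x x
    rw [if_pos rfl] at h
    calc s x * γ x = s x * γ x * (s x * s x) := by rw [hR1a, mul_one]
      _ = (s x * γ x * s x) * s x := (mul_assoc _ _ _).symm
      _ = -γ x * s x := by rw [h]
      _ = -(γ x * s x) := neg_mul _ _
  -- s x commutes with γ x' for x ≠ x'
  have hcomm : ∀ x x', x ≠ x' → s x * γ x' = γ x' * s x := by
    intro x x' hne
    have h := hR3 x x'
    rw [if_neg hne] at h
    calc s x * γ x' = s x * γ x' * (s x * s x) := by rw [hR1a, mul_one]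
      _ = (s x * γ x' * s x) * s x := (mul_assoc _ _ _).symm
      _ = γ x' * s x := by rw [h]
  -- γ's anticommute for x ≠ x'
  have hγanti : ∀ x x', x ≠ x' → γ x' * γ x = -(γ x * γ x') := by
    intro x x' hne
    have h := hR2 x x'
    rw [if_neg hne] at h
    exact eq_neg_of_add_eq_zero_right h
  -- star of c
  have hcstar : ∀ x, star (c x) = (1 / 2 : ℂ) • ((1 + s x) * γ x) := by
    intro x
    rw [hc, star_smul, star_mul, star_add, star_one, hssa, hγsa]
    congr 1
    simp
  refine ⟨?_, ?_, ?_, ?_⟩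
  · intro x x'
    rw [hc, hc, smul_mul_smul_comm, smul_mul_smul_comm, ← smul_add]
    by_cases hxx : x = x'
    · subst hxx
      rw [auxL1' (γ x) (s x) (ha2 x) (hR1a x) (hanti x), add_zero, smul_zero]
    · rw [auxM1' (γ x) (s x) (γ x') (s x') (hγanti x x' hxx) (hcomm x x' hxx)
        (hcomm x' x (Ne.symm hxx)) (hR1b x' x), smul_zero]
  · intro x x'
    rw [hcstar, hc, smul_mul_smul_comm, smul_mul_smul_comm, ← smul_add]
    by_cases hxx : x = x'
    · subst hxx
      rw [if_pos rfl, auxL2' (γ x) (s x) (ha2 x) (hR1a x) (hanti x)]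
      rw [show ((1:A)+1+1+1) = (4:ℂ) • (1:A) by rw [Algebra.smul_def, map_ofNat, mul_one]; norm_num, smul_smul]
      norm_num
    · rw [if_neg hxx, auxM2' (γ x) (s x) (γ x') (s x') (hγanti x x' hxx)
        (hcomm x x' hxx) (hcomm x' x (Ne.symm hxx)) (hR1b x' x), smul_zero]
  · intro x
    rw [hcstar, hc, ← smul_add, auxL4' (γ x) (s x) (hanti x),
      show (2:A) * γ x = (2:ℂ) • γ x by rw [Algebra.smul_def, map_ofNat], smul_smul]
    norm_num
  · intro x
    rw [hcstar, hc, smul_mul_smul_comm, smul_mul_smul_comm, ← smul_sub,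
      auxL3' (γ x) (s x) (ha2 x) (hR1a x) (hanti x),
      show (4:A) * s x = (4:ℂ) • s x by rw [Algebra.smul_def, map_ofNat], smul_smul]
    norm_num
end

section
/- Let X be a type with decidable equality equipped with a linear order, and let A be a unital ring. Suppose γ : X → A and s : X → A satisfy the relations R': (R'₁) s x * s x = 1 and s x * s x' = s x' * s x for all x, x'; (R'₂) γ x * γ x' + γ x' * γ x = 2·1 if x = x' and = 0 if x ≠ x'; (R'₃) s x * γ x' * s x = −γ x' if x = x' and = γ x' if x ≠ x'. For a finset J of X, let Γ_J denote the product of the γ x for x ∈ J taken in increasing order, and S_J the product of the s x for x ∈ J. Then for all finsets J, J' of X: Γ_J * S_{J'} = (−1)^{|J ∩ J'|} • (S_{J'} * Γ_J). -/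
/-!
Each `γ x` commutes with each `s a`, up to the sign `-1` exactly when `a = x`: conjugate
relation R'₃ by the involution `s a`. Such sign-commutation relations pass to products, with
the exponents adding up, so moving `Γ_J` past `S_{J'}` collects one sign per `x ∈ J ∩ J'`.
-/

/-- The ordered product of `f x` over `x ∈ J`, taken in increasing order. -/
def ordProd {X : Type*} [LinearOrder X] {A : Type*} [Monoid A]
    (f : X → A) (J : Finset X) : A :=
  ((J.sort (· ≤ ·)).map f).prod

section SignCommute

variable {ι R : Type*} [Ring R]

theorem mul_list_prod_map_eq_neg_one_pow_smul (a : R) (f : ι → R) (n : ι → ℕ) (l : List ι)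
    (h : ∀ i ∈ l, a * f i = ((-1 : ℤ) ^ n i) • (f i * a)) :
    a * (l.map f).prod = ((-1 : ℤ) ^ (l.map n).sum) • ((l.map f).prod * a) := by
  induction l with
  | nil => simp
  | cons i l ih =>
    have ih := ih fun j hj => h j (List.mem_cons_of_mem i hj)
    simp only [List.map_cons, List.prod_cons, List.sum_cons]
    rw [← mul_assoc, h i List.mem_cons_self, smul_mul_assoc, mul_assoc, ih, mul_smul_comm,
      smul_smul, ← pow_add, mul_assoc]

theorem list_prod_map_mul_eq_neg_one_pow_smul (f : ι → R) (n : ι → ℕ) (l : List ι) (b : R)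
    (h : ∀ i ∈ l, f i * b = ((-1 : ℤ) ^ n i) • (b * f i)) :
    (l.map f).prod * b = ((-1 : ℤ) ^ (l.map n).sum) • (b * (l.map f).prod) := by
  induction l with
  | nil => simp
  | cons i l ih =>
    have ih := ih fun j hj => h j (List.mem_cons_of_mem i hj)
    simp only [List.map_cons, List.prod_cons, List.sum_cons]
    rw [mul_assoc, ih, mul_smul_comm, ← mul_assoc, h i List.mem_cons_self, smul_mul_assoc,
      smul_smul, ← pow_add, add_comm, mul_assoc]

end SignCommute

theorem Finset.sum_map_sort {X M : Type*} [LinearOrder X] [AddCommMonoid M] (J : Finset X)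
    (f : X → M) : ((J.sort (· ≤ ·)).map f).sum = ∑ x ∈ J, f x := by
  rw [((J.sort_perm_toList (· ≤ ·)).map f).sum_eq, Finset.sum_map_toList]

section CliffordRelations

variable {X : Type*} [DecidableEq X] {A : Type*} [Ring A] {γ s : X → A}

theorem gamma_mul_s (hR1a : ∀ x, s x * s x = 1)
    (hR3 : ∀ x x', s x * γ x' * s x = if x = x' then -γ x' else γ x') (x a : X) :
    γ x * s a = ((-1 : ℤ) ^ (if a = x then 1 else 0)) • (s a * γ x) := by
  have hconj : γ x * s a = s a * (s a * γ x * s a) := by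
    simp only [← mul_assoc, hR1a, one_mul]
  rw [hconj, hR3]
  split_ifs <;> simp

theorem gamma_mul_ordProd_s [LinearOrder X] (hR1a : ∀ x, s x * s x = 1)
    (hR3 : ∀ x x', s x * γ x' * s x = if x = x' then -γ x' else γ x') (x : X) (J' : Finset X) :
    γ x * ordProd s J' = ((-1 : ℤ) ^ (if x ∈ J' then 1 else 0)) • (ordProd s J' * γ x) := by
  rw [ordProd, mul_list_prod_map_eq_neg_one_pow_smul _ _ _ _
      fun a _ => gamma_mul_s hR1a hR3 x a,
    Finset.sum_map_sort, Finset.sum_ite_eq']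

end CliffordRelations

theorem stmt_8_general {X : Type*} [DecidableEq X] [LinearOrder X] {A : Type*} [Ring A]
    (γ s : X → A)
    (hR1a : ∀ x : X, s x * s x = 1)
    (hR3 : ∀ x x' : X, s x * γ x' * s x = if x = x' then -γ x' else γ x')
    (J J' : Finset X) :
    ordProd γ J * ordProd s J' =
      ((-1 : ℤ) ^ (J ∩ J').card) • (ordProd s J' * ordProd γ J) := by
  have h := list_prod_map_mul_eq_neg_one_pow_smul γ _ (J.sort (· ≤ ·)) _
    fun x _ => gamma_mul_ordProd_s hR1a hR3 x J'
  rwa [Finset.sum_map_sort, Finset.sum_boole, Finset.filter_mem_eq_inter, Nat.cast_id] at h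

theorem stmt_8 {X : Type*} [DecidableEq X] [LinearOrder X] {A : Type*} [Ring A]
    (γ s : X → A)
    (hR1a : ∀ x : X, s x * s x = 1)
    (hR1b : ∀ x x' : X, s x * s x' = s x' * s x)
    (hR2 : ∀ x x' : X, γ x * γ x' + γ x' * γ x = if x = x' then (2 : A) * 1 else 0)
    (hR3 : ∀ x x' : X, s x * γ x' * s x = if x = x' then -γ x' else γ x')
    (J J' : Finset X) :
    ordProd γ J * ordProd s J' =
      ((-1 : ℤ) ^ (J ∩ J').card) • (ordProd s J' * ordProd γ J) :=
  stmt_8_general γ s hR1a hR3 J J'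
end

section
/- Let X be a type with decidable equality equipped with a linear order, and let A be a unital ring. Suppose γ : X → A and s : X → A satisfy the relations R': (R'₁) s x * s x = 1 and s x * s x' = s x' * s x for all x, x'; (R'₂) γ x * γ x' + γ x' * γ x = 2·1 if x = x' and = 0 if x ≠ x'; (R'₃) s x * γ x' * s x = −γ x' if x = x' and = γ x' if x ≠ x'. For a finset J of X, let Γ_J denote the product of the γ x for x ∈ J taken in increasing order. Then for all finsets J, J' of X: Γ_J * Γ_{J'} = (−1)^{|J|·|J'| − |J ∩ J'|} • (Γ_{J'} * Γ_J). -/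
section Anticomm

variable {X A : Type*} [DecidableEq X] [Ring A] {f : X → A}

theorem prod_map_mul_of_anticomm (hf : ∀ x y, x ≠ y → f x * f y = -(f y * f x))
    (l : List X) (x : X) :
    (l.map f).prod * f x = ((-1 : ℤ) ^ l.countP (· ≠ x)) • (f x * (l.map f).prod) := by
  induction l with
  | nil => simp
  | cons a l ih =>
    rw [List.map_cons, List.prod_cons, mul_assoc, ih, mul_smul_comm, List.countP_cons]
    by_cases h : a = x
    · subst h
      simp
    · simp only [ne_eq, h, not_false_eq_true, decide_true, ↓reduceIte, pow_succ, ← mul_assoc,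
        hf a x h, mul_neg_one, neg_smul, smul_neg, neg_mul]

theorem prod_map_mul_prod_map_of_anticomm (hf : ∀ x y, x ≠ y → f x * f y = -(f y * f x))
    (l l' : List X) :
    (l.map f).prod * (l'.map f).prod =
      ((-1 : ℤ) ^ (l'.map fun x => l.countP (· ≠ x)).sum) • ((l'.map f).prod * (l.map f).prod) := by
  induction l' with
  | nil => simp
  | cons x l' ih =>
    simp only [List.map_cons, List.prod_cons, List.sum_cons]
    rw [← mul_assoc, prod_map_mul_of_anticomm hf, smul_mul_assoc, mul_assoc, ih,
      mul_smul_comm, smul_smul, ← pow_add, ← mul_assoc]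

theorem ordProd_mul_ordProd_of_anticomm [LinearOrder X]
    (hf : ∀ x y, x ≠ y → f x * f y = -(f y * f x)) (J J' : Finset X) :
    ordProd f J * ordProd f J' =
      ((-1 : ℤ) ^ ∑ x ∈ J', (J.erase x).card) • (ordProd f J' * ordProd f J) := by
  have hcount (x : X) : (J.sort (· ≤ ·)).countP (· ≠ x) = (J.erase x).card := by
    rw [(J.sort_perm_toList (· ≤ ·)).countP_eq, ← Multiset.coe_countP, Finset.coe_toList,
      Multiset.countP_eq_card_filter, ← Finset.filter_ne' J x]
    rfl
  have hsum : ((J'.sort (· ≤ ·)).map fun x => (J.sort (· ≤ ·)).countP (· ≠ x)).sum =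
      ∑ x ∈ J', (J.erase x).card := by
    rw [((J'.sort_perm_toList (· ≤ ·)).map _).sum_eq, Finset.sum_map_toList]
    exact Finset.sum_congr rfl fun x _ => hcount x
  rw [ordProd, ordProd, prod_map_mul_prod_map_of_anticomm hf, hsum]

end Anticomm

theorem Finset.sum_card_erase_add_card_inter {X : Type*} [DecidableEq X] (J J' : Finset X) :
    ∑ x ∈ J', (J.erase x).card + (J ∩ J').card = J.card * J'.card := by
  have hterm (x : X) : (J.erase x).card + (if x ∈ J then 1 else 0) = J.card := by
    split_ifs with hx
    · exact Finset.card_erase_add_one hx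
    · rw [Finset.erase_eq_of_notMem hx, add_zero]
  rw [Finset.inter_comm, ← Finset.filter_mem_eq_inter, Finset.card_filter,
    ← Finset.sum_add_distrib, Finset.sum_congr rfl fun x _ => hterm x, Finset.sum_const,
    smul_eq_mul, mul_comm]

theorem stmt_9_general {X : Type*} [DecidableEq X] [LinearOrder X] {A : Type*} [Ring A]
    (γ : X → A)
    (hR2 : ∀ x x' : X, γ x * γ x' + γ x' * γ x = if x = x' then (2 : A) * 1 else 0)
    (J J' : Finset X) :
    ordProd γ J * ordProd γ J' =
      ((-1 : ℤ) ^ (J.card * J'.card - (J ∩ J').card)) •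
        (ordProd γ J' * ordProd γ J) := by
  have hanti (x y : X) (h : x ≠ y) : γ x * γ y = -(γ y * γ x) :=
    eq_neg_of_add_eq_zero_left (by simpa [h] using hR2 x y)
  have hexp := Finset.sum_card_erase_add_card_inter J J'
  rw [ordProd_mul_ordProd_of_anticomm hanti, show ∑ x ∈ J', (J.erase x).card =
    J.card * J'.card - (J ∩ J').card by omega]

theorem stmt_9 {X : Type*} [DecidableEq X] [LinearOrder X] {A : Type*} [Ring A]
    (γ s : X → A)
    (hR1a : ∀ x : X, s x * s x = 1)
    (hR1b : ∀ x x' : X, s x * s x' = s x' * s x)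
    (hR2 : ∀ x x' : X, γ x * γ x' + γ x' * γ x = if x = x' then (2 : A) * 1 else 0)
    (hR3 : ∀ x x' : X, s x * γ x' * s x = if x = x' then -γ x' else γ x')
    (J J' : Finset X) :
    ordProd γ J * ordProd γ J' =
      ((-1 : ℤ) ^ (J.card * J'.card - (J ∩ J').card)) •
        (ordProd γ J' * ordProd γ J) :=
  stmt_9_general γ hR2 J J'
end

section
/- Let X be a type with decidable equality and A a unital star-algebra over ℂ. Suppose γ : X → A and s : X → A are self-adjoint elements satisfying the relations R': (R'₁) s x * s x = 1 and s x * s x' = s x' * s x for all x, x'; (R'₂) γ x * γ x' + γ x' * γ x = 2·1 if x = x' and = 0 if x ≠ x'; (R'₃) s x * γ x' * s x = −γ x' if x = x' and = γ x' if x ≠ x'. Define ξ x = Complex.I • (γ x * s x). Then for all x, x' ∈ X: (ξ x)* = ξ x; ξ x * ξ x = 1; ξ x * ξ x' = −ξ x' * ξ x when x ≠ x'; γ x' * ξ x * γ x' = −ξ x; and s x' * ξ x * s x' = −ξ x if x = x' and = ξ x if x ≠ x'. -/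
theorem stmt_12 {X : Type*} [DecidableEq X] {A : Type*} [Ring A] [Algebra ℂ A]
    [StarRing A] [StarModule ℂ A]
    (γ s : X → A)
    (hγsa : ∀ x : X, star (γ x) = γ x)
    (hssa : ∀ x : X, star (s x) = s x)
    (hR1a : ∀ x : X, s x * s x = 1)
    (hR1b : ∀ x x' : X, s x * s x' = s x' * s x)
    (hR2 : ∀ x x' : X, γ x * γ x' + γ x' * γ x = if x = x' then (2 : A) * 1 else 0)
    (hR3 : ∀ x x' : X, s x * γ x' * s x = if x = x' then -γ x' else γ x')
    (ξ : X → A)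
    (hξ : ∀ x : X, ξ x = Complex.I • (γ x * s x)) :
    (∀ x : X, star (ξ x) = ξ x) ∧
    (∀ x : X, ξ x * ξ x = 1) ∧
    (∀ x x' : X, x ≠ x' → ξ x * ξ x' = -(ξ x' * ξ x)) ∧
    (∀ x x' : X, γ x' * ξ x * γ x' = -ξ x) ∧
    (∀ x x' : X, s x' * ξ x * s x' = if x = x' then -ξ x else ξ x) := by
  -- s x anticommutes with γ x
  have key1 : ∀ x : X, s x * γ x = -(γ x * s x) := by
    intro x
    have h := hR3 x x
    rw [if_pos rfl] at h
    calc s x * γ x = s x * γ x * (s x * s x) := by rw [hR1a, mul_one]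
      _ = (s x * γ x * s x) * s x := by noncomm_ring
      _ = -(γ x * s x) := by rw [h, neg_mul]
  -- s x commutes with γ x' for x ≠ x'
  have key2 : ∀ x x' : X, x ≠ x' → s x * γ x' = γ x' * s x := by
    intro x x' hne
    have h := hR3 x x'
    rw [if_neg hne] at h
    calc s x * γ x' = s x * γ x' * (s x * s x) := by rw [hR1a, mul_one]
      _ = (s x * γ x' * s x) * s x := by noncomm_ring
      _ = γ x' * s x := by rw [h]
  -- γ x squares to 1
  have gsq : ∀ x : X, γ x * γ x = 1 := by
    intro x
    have h := hR2 x x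
    rw [if_pos rfl, mul_one] at h
    have h2 : (2 : ℂ) • (γ x * γ x) = (2 : ℂ) • (1 : A) := by
      rw [two_smul, two_smul, h]
      norm_num [two_mul]
    exact smul_right_injective A two_ne_zero h2
  -- γ's anticommute
  have ganti : ∀ x x' : X, x ≠ x' → γ x * γ x' = -(γ x' * γ x) := by
    intro x x' hne
    have h := hR2 x x'
    rw [if_neg hne] at h
    exact eq_neg_of_add_eq_zero_left h
  refine ⟨?_, ?_, ?_, ?_, ?_⟩
  · intro x
    rw [hξ, star_smul, star_mul, hγsa, hssa, Complex.star_def, Complex.conj_I,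
      neg_smul, key1, smul_neg, neg_neg]
  · intro x
    rw [hξ, smul_mul_smul_comm, Complex.I_mul_I]
    have : γ x * s x * (γ x * s x) = -1 := by
      calc γ x * s x * (γ x * s x) = γ x * (s x * γ x) * s x := by
            noncomm_ring
        _ = γ x * -(γ x * s x) * s x := by rw [key1]
        _ = -(γ x * γ x * (s x * s x)) := by
            noncomm_ring
        _ = -1 := by rw [gsq, hR1a, one_mul]
    rw [this, neg_one_smul, neg_neg]
  · intro x x' hne
    rw [hξ, hξ, smul_mul_smul_comm, smul_mul_smul_comm, ← smul_neg]
    congr 1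
    calc γ x * s x * (γ x' * s x') = γ x * (s x * γ x') * s x' := by
          noncomm_ring
      _ = γ x * (γ x' * s x) * s x' := by rw [key2 x x' hne]
      _ = (γ x * γ x') * (s x * s x') := by noncomm_ring
      _ = -(γ x' * γ x) * (s x' * s x) := by rw [ganti x x' hne, hR1b]
      _ = -(γ x' * (γ x * s x') * s x) := by
          noncomm_ring
      _ = -(γ x' * (s x' * γ x) * s x) := by rw [key2 x' x hne.symm]
      _ = -(γ x' * s x' * (γ x * s x)) := by noncomm_ring
  · intro x x'
    rw [hξ, mul_smul_comm, smul_mul_assoc, ← smul_neg]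
    congr 1
    by_cases hxx : x = x'
    · subst hxx
      calc γ x * (γ x * s x) * γ x = (γ x * γ x) * (s x * γ x) := by
            noncomm_ring
        _ = -(γ x * s x) := by rw [gsq, one_mul, key1]
    · have hne : x ≠ x' := hxx
      calc γ x' * (γ x * s x) * γ x' = (γ x' * γ x) * (s x * γ x') := by
            noncomm_ring
        _ = (γ x' * γ x) * (γ x' * s x) := by rw [key2 x x' hne]
        _ = -((γ x * γ x') * γ x') * s x := by
            rw [ganti x' x hne.symm]
            noncomm_ring
        _ = -(γ x * s x) := by rw [mul_assoc (γ x), gsq, mul_one]; noncomm_ring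
  · intro x x'
    by_cases hxx : x = x'
    · subst hxx
      rw [if_pos rfl, hξ, mul_smul_comm, smul_mul_assoc, ← smul_neg]
      congr 1
      calc s x * (γ x * s x) * s x = (s x * γ x) * (s x * s x) := by
            noncomm_ring
        _ = -(γ x * s x) := by rw [hR1a, mul_one, key1]
    · rw [if_neg hxx, hξ, mul_smul_comm, smul_mul_assoc]
      congr 1
      calc s x' * (γ x * s x) * s x' = (s x' * γ x) * (s x * s x') := by
            noncomm_ring
        _ = γ x * (s x' * (s x * s x')) := by rw [key2 x' x (Ne.symm hxx), mul_assoc]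
        _ = γ x * s x := by rw [hR1b x x', ← mul_assoc (s x'), hR1a, one_mul]
end

section
/- Let X be a type with decidable equality equipped with a linear order, and let A be a unital algebra over ℂ. Suppose γ : X → A and s : X → A satisfy the relations R': (R'₁) s x * s x = 1 and s x * s x' = s x' * s x for all x, x'; (R'₂) γ x * γ x' + γ x' * γ x = 2·1 if x = x' and = 0 if x ≠ x'; (R'₃) s x * γ x' * s x = −γ x' if x = x' and = γ x' if x ≠ x'. Define ξ x = Complex.I • (γ x * s x), and for a finset J of X let Ξ_J denote the product of the ξ x for x ∈ J taken in increasing order. Then for all finsets J, J' of X: Ξ_J * Ξ_{J'} = (−1)^{|J|·|J'| + |J ∩ J'|} • (Ξ_{J'} * Ξ_J). -/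
section auxlem

variable {X : Type*} [DecidableEq X] {A : Type*} [Ring A]

lemma aux1 (ξ : X → A) (h : ∀ x y : X, x ≠ y → ξ x * ξ y = -(ξ y * ξ x))
    (l : List X) (y : X) :
    ξ y * (l.map ξ).prod =
      ((-1 : ℤ) ^ ((l.filter (· ≠ y)).length)) • ((l.map ξ).prod * ξ y) := by
  induction l with
  | nil => simp
  | cons x t ih =>
    by_cases hxy : x = y
    · subst hxy
      simp only [List.map_cons, List.prod_cons]
      rw [List.filter_cons_of_neg (by simp)]
      calc ξ x * (ξ x * (t.map ξ).prod) = ξ x * (ξ x * (t.map ξ).prod) := rfl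
        _ = ξ x * (((-1 : ℤ) ^ ((t.filter (· ≠ x)).length)) • ((t.map ξ).prod * ξ x)) := by
            rw [ih]
        _ = ((-1 : ℤ) ^ ((t.filter (· ≠ x)).length)) • (ξ x * ((t.map ξ).prod * ξ x)) := by
            rw [mul_smul_comm]
        _ = ((-1 : ℤ) ^ ((t.filter (· ≠ x)).length)) • (ξ x * (t.map ξ).prod * ξ x) := by
            rw [mul_assoc]
    · simp only [List.map_cons, List.prod_cons]
      rw [List.filter_cons_of_pos (by simp [hxy]), List.length_cons]
      have hyx : y ≠ x := fun hh => hxy hh.symm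
      calc ξ y * (ξ x * (t.map ξ).prod) = (ξ y * ξ x) * (t.map ξ).prod := by rw [mul_assoc]
        _ = (-(ξ x * ξ y)) * (t.map ξ).prod := by rw [h y x hyx]
        _ = -(ξ x * (ξ y * (t.map ξ).prod)) := by rw [neg_mul, mul_assoc]
        _ = -(ξ x * (((-1 : ℤ) ^ ((t.filter (· ≠ y)).length)) • ((t.map ξ).prod * ξ y))) := by
            rw [ih]
        _ = -(((-1 : ℤ) ^ ((t.filter (· ≠ y)).length)) • (ξ x * ((t.map ξ).prod * ξ y))) := by
            rw [mul_smul_comm]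
        _ = ((-1 : ℤ) ^ ((t.filter (· ≠ y)).length + 1)) • (ξ x * (t.map ξ).prod * ξ y) := by
            rw [pow_succ, mul_comm, mul_smul, neg_one_zsmul, mul_assoc]
  
lemma aux1' (ξ : X → A) (h : ∀ x y : X, x ≠ y → ξ x * ξ y = -(ξ y * ξ x))
    (l : List X) (y : X) :
    (l.map ξ).prod * ξ y =
      ((-1 : ℤ) ^ ((l.filter (· ≠ y)).length)) • (ξ y * (l.map ξ).prod) := by
  have h1 := aux1 ξ h l y
  have : ((-1 : ℤ) ^ ((l.filter (· ≠ y)).length)) • (ξ y * (l.map ξ).prod)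
      = (((-1 : ℤ) ^ ((l.filter (· ≠ y)).length)) * ((-1 : ℤ) ^ ((l.filter (· ≠ y)).length)))
        • ((l.map ξ).prod * ξ y) := by
    rw [h1, smul_smul]
  rw [this, ← pow_add, ← two_mul, pow_mul]
  norm_num

lemma aux2 (ξ : X → A) (h : ∀ x y : X, x ≠ y → ξ x * ξ y = -(ξ y * ξ x))
    (l' l : List X) :
    (l.map ξ).prod * (l'.map ξ).prod =
      ((-1 : ℤ) ^ ((l'.map (fun y => (l.filter (· ≠ y)).length)).sum))
        • ((l'.map ξ).prod * (l.map ξ).prod) := by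
  induction l' with
  | nil => simp
  | cons y t ih =>
    simp only [List.map_cons, List.prod_cons, List.sum_cons]
    calc (l.map ξ).prod * (ξ y * (t.map ξ).prod)
        = ((l.map ξ).prod * ξ y) * (t.map ξ).prod := by rw [mul_assoc]
      _ = (((-1 : ℤ) ^ ((l.filter (· ≠ y)).length)) • (ξ y * (l.map ξ).prod))
            * (t.map ξ).prod := by rw [aux1' ξ h]
      _ = ((-1 : ℤ) ^ ((l.filter (· ≠ y)).length)) • (ξ y * ((l.map ξ).prod * (t.map ξ).prod)) := by
            rw [smul_mul_assoc, mul_assoc]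
      _ = ((-1 : ℤ) ^ ((l.filter (· ≠ y)).length)) •
            (ξ y * (((-1 : ℤ) ^ ((t.map (fun y => (l.filter (· ≠ y)).length)).sum))
              • ((t.map ξ).prod * (l.map ξ).prod))) := by rw [ih]
      _ = ((-1 : ℤ) ^ ((l.filter (· ≠ y)).length +
            (t.map (fun y => (l.filter (· ≠ y)).length)).sum)) •
            (ξ y * ((t.map ξ).prod * (l.map ξ).prod)) := by
            rw [mul_smul_comm, smul_smul, pow_add]
      _ = ((-1 : ℤ) ^ ((l.filter (· ≠ y)).length +
            (t.map (fun y => (l.filter (· ≠ y)).length)).sum)) •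
            (ξ y * (t.map ξ).prod * (l.map ξ).prod) := by rw [mul_assoc]

end auxlem

theorem stmt_13 {X : Type*} [DecidableEq X] [LinearOrder X] {A : Type*} [Ring A]
    [Algebra ℂ A]
    (γ s : X → A)
    (hR1a : ∀ x : X, s x * s x = 1)
    (hR1b : ∀ x x' : X, s x * s x' = s x' * s x)
    (hR2 : ∀ x x' : X, γ x * γ x' + γ x' * γ x = if x = x' then (2 : A) * 1 else 0)
    (hR3 : ∀ x x' : X, s x * γ x' * s x = if x = x' then -γ x' else γ x')
    (ξ : X → A)
    (hξ : ∀ x : X, ξ x = Complex.I • (γ x * s x))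
    (J J' : Finset X) :
    ordProd ξ J * ordProd ξ J' =
      ((-1 : ℤ) ^ (J.card * J'.card + (J ∩ J').card)) •
        (ordProd ξ J' * ordProd ξ J) := by
  -- basic algebraic consequences
  have hsg : ∀ x y : X, x ≠ y → s x * γ y = γ y * s x := by
    intro x y hxy
    have h3 := hR3 x y
    rw [if_neg hxy] at h3
    calc s x * γ y = (s x * γ y * s x) * s x := by rw [mul_assoc, mul_assoc, hR1a, mul_one]
      _ = γ y * s x := by rw [h3]
  have hgg : ∀ x y : X, x ≠ y → γ x * γ y = -(γ y * γ x) := by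
    intro x y hxy
    have h2 := hR2 x y
    rw [if_neg hxy] at h2
    exact eq_neg_of_add_eq_zero_left h2
  have hanti : ∀ x y : X, x ≠ y → ξ x * ξ y = -(ξ y * ξ x) := by
    intro x y hxy
    have hyx : y ≠ x := fun hh => hxy hh.symm
    have key1 : (γ x * s x) * (γ y * s y) = (γ x * γ y) * (s x * s y) := by
      calc (γ x * s x) * (γ y * s y) = γ x * (s x * γ y) * s y := by simp [mul_assoc]
        _ = γ x * (γ y * s x) * s y := by rw [hsg x y hxy]
        _ = (γ x * γ y) * (s x * s y) := by simp [mul_assoc]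
    have key2 : (γ y * s y) * (γ x * s x) = (γ y * γ x) * (s x * s y) := by
      calc (γ y * s y) * (γ x * s x) = γ y * (s y * γ x) * s x := by simp [mul_assoc]
        _ = γ y * (γ x * s y) * s x := by rw [hsg y x hyx]
        _ = (γ y * γ x) * (s y * s x) := by simp [mul_assoc]
        _ = (γ y * γ x) * (s x * s y) := by rw [hR1b]
    have key : (γ x * s x) * (γ y * s y) = -((γ y * s y) * (γ x * s x)) := by
      rw [key1, key2, hgg x y hxy, neg_mul]
    rw [hξ x, hξ y, smul_mul_smul_comm, key, smul_neg, ← smul_mul_smul_comm]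
  -- main computation
  have main := aux2 ξ hanti (J'.sort (· ≤ ·)) (J.sort (· ≤ ·))
  rw [ordProd, ordProd, main]
  congr 1
  -- exponent parity
  set l := J.sort (· ≤ ·) with hl
  set l' := J'.sort (· ≤ ·) with hl'
  have hlen : ∀ y : X, (l.filter (· ≠ y)).length = (J.erase y).card := by
    intro y
    have h1 : (l.filter (· ≠ y) : Multiset X) = Multiset.filter (· ≠ y) (l : Multiset X) := by
      rw [Multiset.filter_coe]
    have h2 : (l : Multiset X) = J.val := Finset.sort_eq _ _
    have : (l.filter (· ≠ y)).length = Multiset.card (Multiset.filter (· ≠ y) J.val) := by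
      rw [← h2, ← h1, Multiset.coe_card]
    rw [this, ← Finset.filter_val, ← Finset.card_def, Finset.filter_ne']
  have hsum : (l'.map (fun y => (l.filter (· ≠ y)).length)).sum
      = ∑ y ∈ J', (J.erase y).card := by
    have hperm : l'.Perm J'.toList := Finset.sort_perm_toList _ _
    rw [show (l'.map (fun y => (l.filter (· ≠ y)).length))
        = (l'.map (fun y => (J.erase y).card)) from ?_]
    · rw [(hperm.map _).sum_eq, Finset.sum_map_toList]
    · exact List.map_congr_left (fun y _ => hlen y)
  rw [hsum]
  have hskey : (∑ y ∈ J', (J.erase y).card) + (J ∩ J').card = J.card * J'.card := by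
    have hstep : ∀ y ∈ J', (J.erase y).card + (if y ∈ J then 1 else 0) = J.card := by
      intro y _
      by_cases hy : y ∈ J
      · have hpos : 0 < J.card := Finset.card_pos.mpr ⟨y, hy⟩
        rw [if_pos hy, Finset.card_erase_of_mem hy]
        omega
      · rw [if_neg hy, Finset.erase_eq_of_notMem hy, add_zero]
    have hinter : (J ∩ J').card = ∑ y ∈ J', (if y ∈ J then 1 else 0) := by
      rw [Finset.sum_ite_mem, Finset.sum_const, smul_eq_mul, mul_one, Finset.inter_comm]
    calc (∑ y ∈ J', (J.erase y).card) + (J ∩ J').card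
        = ∑ y ∈ J', ((J.erase y).card + if y ∈ J then 1 else 0) := by
          rw [hinter, ← Finset.sum_add_distrib]
      _ = ∑ _y ∈ J', J.card := Finset.sum_congr rfl hstep
      _ = J'.card * J.card := by rw [Finset.sum_const, smul_eq_mul]
      _ = J.card * J'.card := mul_comm _ _
  have hexp : J.card * J'.card + (J ∩ J').card
      = (∑ y ∈ J', (J.erase y).card) + 2 * (J ∩ J').card := by omega
  rw [hexp, pow_add, pow_mul]
  norm_num
end

section
/- Let X be a type with decidable equality equipped with a linear order, and let A be a unital algebra over ℂ. Suppose γ : X → A and s : X → A satisfy the relations R': (R'₁) s x * s x = 1 and s x * s x' = s x' * s x for all x, x'; (R'₂) γ x * γ x' + γ x' * γ x = 2·1 if x = x' and = 0 if x ≠ x'; (R'₃) s x * γ x' * s x = −γ x' if x = x' and = γ x' if x ≠ x'. Define ξ x = Complex.I • (γ x * s x); for a finset J of X let Ξ_J denote the product of the ξ x for x ∈ J taken in increasing order, and S_J the product of the s x for x ∈ J. Then for all finsets J, J' of X: Ξ_J * S_{J'} = (−1)^{|J ∩ J'|} • (S_{J'} * Ξ_J). -/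
/-!
Since `s y` is an involution, `R'₃` says `s y * γ x = ± γ x * s y`, and with `R'₁` this makes
each `ξ x` anticommute with `s x` and commute with `s y` for `y ≠ x`. Moving the factors of
`Ξ_J` one at a time through `S_{J'}` therefore collects one sign `-1` for each `x ∈ J ∩ J'`.
-/

def SkewCommute {R A : Type*} [SMul R A] [Mul A] (c : R) (a b : A) : Prop :=
  a * b = c • (b * a)

namespace SkewCommute

variable {R A ι : Type*} [CommMonoid R] [Monoid A] [MulAction R A]
  [IsScalarTower R A A] [SMulCommClass R A A]

theorem list_prod_right {a : A} {b : ι → A} {c : ι → R}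
    (h : ∀ i, SkewCommute (c i) a (b i)) (L : List ι) :
    SkewCommute (L.map c).prod a (L.map b).prod := by
  induction L with
  | nil => simp [SkewCommute]
  | cons i L ih =>
    simp only [SkewCommute, List.map_cons, List.prod_cons] at ih ⊢
    rw [← mul_assoc, h i, smul_mul_assoc, mul_assoc, ih, mul_smul_comm, smul_smul,
      ← mul_assoc, mul_comm (c i)]

theorem list_prod_left {a : ι → A} {b : A} {c : ι → R}
    (h : ∀ i, SkewCommute (c i) (a i) b) (L : List ι) :
    SkewCommute (L.map c).prod (L.map a).prod b := by
  induction L with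
  | nil => simp [SkewCommute]
  | cons i L ih =>
    simp only [SkewCommute, List.map_cons, List.prod_cons] at ih ⊢
    rw [mul_assoc, ih, mul_smul_comm, ← mul_assoc, h i, smul_mul_assoc, smul_smul,
      mul_assoc, mul_comm (c i)]

end SkewCommute

theorem Finset.prod_map_sort {ι M : Type*} [LinearOrder ι] [CommMonoid M]
    (s : Finset ι) (f : ι → M) : ((s.sort (· ≤ ·)).map f).prod = ∏ i ∈ s, f i := by
  rw [Finset.prod_eq_multiset_prod, ← Finset.sort_eq s (· ≤ ·), Multiset.map_coe,
    Multiset.prod_coe]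

theorem mul_eq_conj_mul_of_mul_self_eq_one {M : Type*} [Monoid M] {s g t : M} (hs : s * s = 1)
    (h : s * g * s = t) : s * g = t * s := by
  rw [← h, mul_assoc _ s, hs, mul_one]

theorem stmt_14_general {X : Type*} [DecidableEq X] [LinearOrder X] {A : Type*} [Ring A]
    [Algebra ℂ A]
    (γ s : X → A)
    (hR1a : ∀ x : X, s x * s x = 1)
    (hR1b : ∀ x x' : X, s x * s x' = s x' * s x)
    (hR3 : ∀ x x' : X, s x * γ x' * s x = if x = x' then -γ x' else γ x')
    (ξ : X → A)
    (hξ : ∀ x : X, ξ x = Complex.I • (γ x * s x))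
    (J J' : Finset X) :
    ordProd ξ J * ordProd s J' =
      ((-1 : ℤ) ^ (J ∩ J').card) • (ordProd s J' * ordProd ξ J) := by
  have hξs : ∀ x y, SkewCommute (if y = x then (-1 : ℤ) else 1) (ξ x) (s y) := by
    intro x y
    have hsγ := mul_eq_conj_mul_of_mul_self_eq_one (hR1a y) (hR3 y x)
    rw [SkewCommute, hξ, smul_mul_assoc, mul_smul_comm, smul_comm, ← mul_assoc, hsγ]
    by_cases hyx : y = x
    · rw [if_pos hyx, if_pos hyx, hyx]
      simp only [neg_one_smul, neg_mul, neg_neg, mul_assoc]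
    · rw [if_neg hyx, if_neg hyx, one_smul, mul_assoc, mul_assoc, hR1b]
  have hξS : ∀ x, SkewCommute (if x ∈ J' then (-1 : ℤ) else 1) (ξ x) (ordProd s J') := by
    intro x
    have := SkewCommute.list_prod_right (hξs x) (J'.sort (· ≤ ·))
    rwa [Finset.prod_map_sort, Finset.prod_ite_eq'] at this
  have := SkewCommute.list_prod_left hξS (J.sort (· ≤ ·))
  rwa [Finset.prod_map_sort, Finset.prod_ite_mem, Finset.prod_const] at this

theorem stmt_14 {X : Type*} [DecidableEq X] [LinearOrder X] {A : Type*} [Ring A]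
    [Algebra ℂ A]
    (γ s : X → A)
    (hR1a : ∀ x : X, s x * s x = 1)
    (hR1b : ∀ x x' : X, s x * s x' = s x' * s x)
    (hR2 : ∀ x x' : X, γ x * γ x' + γ x' * γ x = if x = x' then (2 : A) * 1 else 0)
    (hR3 : ∀ x x' : X, s x * γ x' * s x = if x = x' then -γ x' else γ x')
    (ξ : X → A)
    (hξ : ∀ x : X, ξ x = Complex.I • (γ x * s x))
    (J J' : Finset X) :
    ordProd ξ J * ordProd s J' =
      ((-1 : ℤ) ^ (J ∩ J').card) • (ordProd s J' * ordProd ξ J) :=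
  stmt_14_general γ s hR1a hR1b hR3 ξ hξ J J'
end

section
/- Let X be a type with decidable equality equipped with a linear order, and let A be a unital algebra over ℂ. Suppose γ : X → A and s : X → A satisfy the relations R': (R'₁) s x * s x = 1 and s x * s x' = s x' * s x for all x, x'; (R'₂) γ x * γ x' + γ x' * γ x = 2·1 if x = x' and = 0 if x ≠ x'; (R'₃) s x * γ x' * s x = −γ x' if x = x' and = γ x' if x ≠ x'. Define ξ x = Complex.I • (γ x * s x); for a finset J of X let Ξ_J denote the product of the ξ x for x ∈ J taken in increasing order, and Γ_J the product of the γ x for x ∈ J taken in increasing order. Then for all finsets J, J' of X: Ξ_J * Γ_{J'} = (−1)^{|J|·|J'|} • (Γ_{J'} * Ξ_J). -/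
/-!
Each `ξ x` anticommutes with each `γ y`: for `x ≠ y`, `s x` commutes with `γ y` and `γ x`
anticommutes with it; for `x = y`, `s x` anticommutes with `γ x`. Moving the `|J|` factors of
`Ξ_J` past the `|J'|` factors of `Γ_{J'}` therefore costs `|J| * |J'|` signs.
-/

section Anticommute

variable {A : Type*} [Ring A]

theorem List.mul_prod_eq_neg_one_pow_smul (a : A) (l : List A)
    (h : ∀ y ∈ l, a * y = -(y * a)) :
    a * l.prod = ((-1 : ℤ) ^ l.length) • (l.prod * a) := by
  induction l with
  | nil => simp
  | cons b t ih =>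
    rw [List.prod_cons, List.length_cons, ← mul_assoc, h b List.mem_cons_self, neg_mul,
      mul_assoc, ih fun y hy => h y (List.mem_cons_of_mem _ hy), pow_succ, mul_smul_comm,
      mul_smul, neg_one_zsmul, smul_neg, mul_assoc]

theorem List.prod_mul_prod_eq_neg_one_pow_smul (l₁ l₂ : List A)
    (h : ∀ x ∈ l₁, ∀ y ∈ l₂, x * y = -(y * x)) :
    l₁.prod * l₂.prod = ((-1 : ℤ) ^ (l₁.length * l₂.length)) • (l₂.prod * l₁.prod) := by
  induction l₁ with
  | nil => simp
  | cons b t ih =>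
    rw [List.prod_cons, List.length_cons, mul_assoc,
      ih fun x hx => h x (List.mem_cons_of_mem _ hx), mul_smul_comm, ← mul_assoc b,
      List.mul_prod_eq_neg_one_pow_smul b l₂ (h b List.mem_cons_self), smul_mul_assoc,
      smul_smul, ← pow_add, mul_assoc, add_one_mul, add_comm]

theorem ordProd_mul_ordProd_eq_neg_one_pow_smul {X : Type*} [LinearOrder X] (f g : X → A)
    (J J' : Finset X) (h : ∀ x ∈ J, ∀ y ∈ J', f x * g y = -(g y * f x)) :
    ordProd f J * ordProd g J' =
      ((-1 : ℤ) ^ (J.card * J'.card)) • (ordProd g J' * ordProd f J) := by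
  unfold ordProd
  rw [List.prod_mul_prod_eq_neg_one_pow_smul, List.length_map, List.length_map,
    Finset.length_sort, Finset.length_sort]
  simp only [List.mem_map, Finset.mem_sort]
  rintro _ ⟨x, hx, rfl⟩ _ ⟨y, hy, rfl⟩
  exact h x hx y hy

theorem mul_eq_neg_mul_of_mul_mul_eq_neg {s g : A} (hs : s * s = 1) (h : s * g * s = -g) :
    s * g = -(g * s) := by
  calc s * g = s * g * s * s := by rw [mul_assoc _ s, hs, mul_one]
    _ = -(g * s) := by rw [h, neg_mul]

theorem commute_of_mul_mul_eq {s g : A} (hs : s * s = 1) (h : s * g * s = g) :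
    Commute s g := by
  calc s * g = s * g * s * s := by rw [mul_assoc _ s, hs, mul_one]
    _ = g * s := by rw [h]

end Anticommute

theorem stmt_15_general {X : Type*} [DecidableEq X] [LinearOrder X] {A : Type*} [Ring A]
    [Algebra ℂ A]
    (γ s : X → A)
    (hR1a : ∀ x : X, s x * s x = 1)
    (hR2 : ∀ x x' : X, γ x * γ x' + γ x' * γ x = if x = x' then (2 : A) * 1 else 0)
    (hR3 : ∀ x x' : X, s x * γ x' * s x = if x = x' then -γ x' else γ x')
    (ξ : X → A)
    (hξ : ∀ x : X, ξ x = Complex.I • (γ x * s x))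
    (J J' : Finset X) :
    ordProd ξ J * ordProd γ J' =
      ((-1 : ℤ) ^ (J.card * J'.card)) • (ordProd γ J' * ordProd ξ J) := by
  have hγs : ∀ x y, γ x * s x * γ y = -(γ y * (γ x * s x)) := by
    intro x y
    by_cases hxy : x = y
    · subst hxy
      have hsγ := mul_eq_neg_mul_of_mul_mul_eq_neg (hR1a x) (by simpa using hR3 x x)
      rw [mul_assoc, hsγ, mul_neg]
    · have hsγ := commute_of_mul_mul_eq (hR1a x) (by simpa [hxy] using hR3 x y)
      have hγγ : γ x * γ y = -(γ y * γ x) :=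
        eq_neg_of_add_eq_zero_left (by simpa [hxy] using hR2 x y)
      rw [mul_assoc, hsγ.eq, ← mul_assoc, hγγ, neg_mul, mul_assoc]
  refine ordProd_mul_ordProd_eq_neg_one_pow_smul ξ γ J J' fun x _ y _ => ?_
  rw [hξ, smul_mul_assoc, hγs, smul_neg, mul_smul_comm]

theorem stmt_15 {X : Type*} [DecidableEq X] [LinearOrder X] {A : Type*} [Ring A]
    [Algebra ℂ A]
    (γ s : X → A)
    (hR1a : ∀ x : X, s x * s x = 1)
    (hR1b : ∀ x x' : X, s x * s x' = s x' * s x)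
    (hR2 : ∀ x x' : X, γ x * γ x' + γ x' * γ x = if x = x' then (2 : A) * 1 else 0)
    (hR3 : ∀ x x' : X, s x * γ x' * s x = if x = x' then -γ x' else γ x')
    (ξ : X → A)
    (hξ : ∀ x : X, ξ x = Complex.I • (γ x * s x))
    (J J' : Finset X) :
    ordProd ξ J * ordProd γ J' =
      ((-1 : ℤ) ^ (J.card * J'.card)) • (ordProd γ J' * ordProd ξ J) :=
  stmt_15_general γ s hR1a hR2 hR3 ξ hξ J J'
end

section
/- Let X be a type with decidable equality equipped with a linear order, and let A be a unital algebra over ℂ. Suppose γ : X → A and s : X → A satisfy the relations R': (R'₁) s x * s x = 1 and s x * s x' = s x' * s x for all x, x'; (R'₂) γ x * γ x' + γ x' * γ x = 2·1 if x = x' and = 0 if x ≠ x'; (R'₃) s x * γ x' * s x = −γ x' if x = x' and = γ x' if x ≠ x'. Define ξ x = Complex.I • (γ x * s x); for finsets J of X let Ξ_J, Γ_J denote the products of the ξ x, respectively γ x, for x ∈ J in increasing order, and S_J the product of the s x for x ∈ J. Let Q be a finset of X with |Q| even. Then Ξ_Q * Γ_J = Γ_J * Ξ_Q for every finset J of X,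 and Ξ_Q * S_V = S_V * Ξ_Q for every finset V of X with |Q ∩ V| even. (Hence all Ξ_Q with Q a Γ-admissible contour of even length lie in the commutant of the algebra generated by the triangle elements Γ_T and vertex elements S_V.) -/
/-!
By the relations, each `ξ x = i γ x s x` anticommutes with every `γ y` and with `s x`, and
commutes with `s v` for `v ≠ x`. Moving `γ y` through the ordered
product `Ξ_Q` therefore costs the sign `(-1)^|Q| = 1`, and moving `s v` through it costs `-1`
exactly when `v ∈ Q`; so moving all of `S_V` through `Ξ_Q` costs `(-1)^|Q ∩ V| = 1`.
-/

theorem ordProd_eq_prod {X M : Type*} [LinearOrder X] [CommMonoid M] (f : X → M)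
    (J : Finset X) : ordProd f J = ∏ x ∈ J, f x := by
  rw [ordProd, Finset.prod, ← Finset.sort_eq (s := J) (r := (· ≤ ·)), Multiset.map_coe,
    Multiset.prod_coe]

theorem mul_list_prod_map_eq_smul {ι M A : Type*} [Monoid M] [Monoid A] [MulAction M A]
    [SMulCommClass M A A] [IsScalarTower M A A] (a : A) (f : ι → A) (ε : ι → M) (l : List ι)
    (h : ∀ i ∈ l, a * f i = ε i • (f i * a)) :
    a * (l.map f).prod = (l.map ε).prod • ((l.map f).prod * a) := by
  induction l with
  | nil => simp
  | cons i l ih =>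
    rw [List.forall_mem_cons] at h
    simp only [List.map_cons, List.prod_cons]
    rw [← mul_assoc, h.1, smul_mul_assoc, mul_assoc, ih h.2, mul_smul_comm, mul_smul, mul_assoc]

theorem mul_ordProd_eq_smul {X M A : Type*} [LinearOrder X] [CommMonoid M] [Monoid A]
    [MulAction M A] [SMulCommClass M A A] [IsScalarTower M A A] (a : A) (f : X → A)
    (ε : X → M) (J : Finset X) (h : ∀ x ∈ J, a * f x = ε x • (f x * a)) :
    a * ordProd f J = (∏ x ∈ J, ε x) • (ordProd f J * a) := by
  rw [← ordProd_eq_prod]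
  exact mul_list_prod_map_eq_smul a f ε _ fun x hx => h x (Finset.mem_sort _ |>.mp hx)

theorem mul_eq_units_int_smul_mul_symm {A : Type*} [Ring A] {a b : A} {ε : ℤˣ}
    (h : a * b = ε • (b * a)) : b * a = ε • (a * b) := by
  rw [h, smul_smul, Int.units_mul_self, one_smul]

section Relations

variable {X A : Type*} [DecidableEq X] [Ring A] {γ s : X → A}

theorem gamma_mul_self [Algebra ℂ A]
    (hR2 : ∀ x x' : X, γ x * γ x' + γ x' * γ x = if x = x' then (2 : A) * 1 else 0) (x : X) :
    γ x * γ x = 1 := by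
  have h : (2 : A) * (γ x * γ x) = 2 * 1 := by simpa [two_mul] using hR2 x x
  have two_isUnit : IsUnit (2 : A) := by
    rw [← map_ofNat (algebraMap ℂ A) 2]
    exact (isUnit_of_invertible (2 : ℂ)).map _
  exact two_isUnit.mul_left_cancel h

theorem gamma_mul_gamma_of_ne
    (hR2 : ∀ x x' : X, γ x * γ x' + γ x' * γ x = if x = x' then (2 : A) * 1 else 0) {x y : X}
    (hxy : x ≠ y) : γ x * γ y = -(γ y * γ x) :=
  eq_neg_of_add_eq_zero_left <| by rw [hR2, if_neg hxy]

theorem s_mul_gamma (hR1a : ∀ x : X, s x * s x = 1)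
    (hR3 : ∀ x x' : X, s x * γ x' * s x = if x = x' then -γ x' else γ x') (x y : X) :
    s x * γ y = (if x = y then -1 else 1 : ℤˣ) • (γ y * s x) := by
  have h := congrArg (· * s x) (hR3 x y)
  simp only [mul_assoc, hR1a, mul_one] at h
  rw [h]
  split_ifs <;> simp

theorem gamma_mul_gamma_mul_s [Algebra ℂ A] (hR1a : ∀ x : X, s x * s x = 1)
    (hR2 : ∀ x x' : X, γ x * γ x' + γ x' * γ x = if x = x' then (2 : A) * 1 else 0)
    (hR3 : ∀ x x' : X, s x * γ x' * s x = if x = x' then -γ x' else γ x') (x y : X) :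
    γ y * (γ x * s x) = (-1 : ℤˣ) • (γ x * s x * γ y) := by
  rw [mul_assoc (γ x), s_mul_gamma hR1a hR3, Units.neg_smul, one_smul]
  by_cases hxy : x = y
  · subst hxy
    rw [if_pos rfl, Units.neg_smul, one_smul, ← mul_assoc, gamma_mul_self hR2, mul_neg,
      ← mul_assoc, gamma_mul_self hR2, one_mul, neg_neg]
  · rw [if_neg hxy, one_smul, ← mul_assoc, ← mul_assoc,
      gamma_mul_gamma_of_ne hR2 (Ne.symm hxy), neg_mul]

theorem s_mul_gamma_mul_s (hR1a : ∀ x : X, s x * s x = 1)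
    (hR1b : ∀ x x' : X, s x * s x' = s x' * s x)
    (hR3 : ∀ x x' : X, s x * γ x' * s x = if x = x' then -γ x' else γ x') (x v : X) :
    s v * (γ x * s x) = (if v = x then -1 else 1 : ℤˣ) • (γ x * s x * s v) := by
  rw [← mul_assoc, s_mul_gamma hR1a hR3, smul_mul_assoc, mul_assoc, mul_assoc, hR1b]

end Relations

theorem stmt_16 {X : Type*} [DecidableEq X] [LinearOrder X] {A : Type*} [Ring A]
    [Algebra ℂ A]
    (γ s : X → A)
    (hR1a : ∀ x : X, s x * s x = 1)
    (hR1b : ∀ x x' : X, s x * s x' = s x' * s x)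
    (hR2 : ∀ x x' : X, γ x * γ x' + γ x' * γ x = if x = x' then (2 : A) * 1 else 0)
    (hR3 : ∀ x x' : X, s x * γ x' * s x = if x = x' then -γ x' else γ x')
    (ξ : X → A)
    (hξ : ∀ x : X, ξ x = Complex.I • (γ x * s x))
    (Q : Finset X) (hQ : Even Q.card) :
    (∀ J : Finset X, ordProd ξ Q * ordProd γ J = ordProd γ J * ordProd ξ Q) ∧
    (∀ V : Finset X, Even (Q ∩ V).card →
      ordProd ξ Q * ordProd s V = ordProd s V * ordProd ξ Q) := by
  have gamma_mul_Ξ (y : X) : γ y * ordProd ξ Q = ordProd ξ Q * γ y := by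
    rw [mul_ordProd_eq_smul _ ξ (fun _ => (-1 : ℤˣ)) Q fun x _ => by
      rw [hξ, mul_smul_comm, smul_mul_assoc, gamma_mul_gamma_mul_s hR1a hR2 hR3, smul_comm]]
    rw [Finset.prod_const, hQ.neg_one_pow, one_smul]
  have Ξ_mul_s (v : X) :
      ordProd ξ Q * s v = (if v ∈ Q then -1 else 1 : ℤˣ) • (s v * ordProd ξ Q) := by
    refine mul_eq_units_int_smul_mul_symm ?_
    rw [mul_ordProd_eq_smul _ ξ (fun x => if v = x then (-1 : ℤˣ) else 1) Q fun x _ => by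
      rw [hξ, mul_smul_comm, smul_mul_assoc, s_mul_gamma_mul_s hR1a hR1b hR3, smul_comm]]
    rw [Finset.prod_ite_eq]
  refine ⟨fun J => ?_, fun V hV => ?_⟩
  · exact Commute.list_prod_right _ _ fun _ hy => by
      obtain ⟨y, -, rfl⟩ := List.mem_map.mp hy
      exact (gamma_mul_Ξ y).symm
  · rw [mul_ordProd_eq_smul _ s _ V fun v _ => Ξ_mul_s v, Finset.prod_ite_mem,
      Finset.prod_const, Finset.inter_comm, hV.neg_one_pow, one_smul]
end

section
/- Let g be a positive natural number, and let G be the presented group on 2g generators a₀, a₁, …, a_{2g−1} (the free group on Fin (2g)) with the single relator ∏_{i=0}^{g−1} (a_{2i} * a_{2i+1} * a_{2i}⁻¹ * a_{2i+1}⁻¹), i.e. the fundamental group of the closed orientable surface of genus g. Then the abelianization of G is isomorphic, as a group, to the free abelian group on Fin (2g) (equivalently, to ℤ^{2g}). -/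
/-- The single relator `∏ i, a₍₂ᵢ₎ a₍₂ᵢ₊₁₎ a₍₂ᵢ₎⁻¹ a₍₂ᵢ₊₁₎⁻¹` of the fundamental
group of the closed orientable surface of genus `g`. -/
def surfaceRelator (g : ℕ) : FreeGroup (Fin (2 * g)) :=
  ((List.finRange g).map (fun (i : Fin g) =>
    FreeGroup.of (⟨2 * (i : ℕ), by have := i.isLt; omega⟩ : Fin (2 * g)) *
    FreeGroup.of (⟨2 * (i : ℕ) + 1, by have := i.isLt; omega⟩ : Fin (2 * g)) *
    (FreeGroup.of (⟨2 * (i : ℕ), by have := i.isLt; omega⟩ : Fin (2 * g)))⁻¹ *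
    (FreeGroup.of (⟨2 * (i : ℕ) + 1, by have := i.isLt; omega⟩ : Fin (2 * g)))⁻¹)).prod

lemma lift_surfaceRelator {g : ℕ} {H : Type*} [CommGroup H] (f : Fin (2 * g) → H) :
    FreeGroup.lift f (surfaceRelator g) = 1 := by
  unfold surfaceRelator
  rw [map_list_prod]
  rw [List.map_map]
  apply List.prod_eq_one
  intro x hx
  simp only [List.mem_map, Function.comp] at hx
  obtain ⟨i, -, rfl⟩ := hx
  simp only [map_mul, map_inv, FreeGroup.lift_apply_of]
  exact commutatorElement_eq_one_iff_commute.mpr (mul_comm _ _)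

theorem stmt_18 (g : ℕ) (hg : 0 < g) :
    Nonempty (Abelianization (PresentedGroup {surfaceRelator g}) ≃*
      Multiplicative (FreeAbelianGroup (Fin (2 * g)))) := by
  set n := 2 * g
  -- φ : Abelianization (PresentedGroup {r}) →* Abelianization (FreeGroup (Fin n))
  let φ : Abelianization (PresentedGroup {surfaceRelator g}) →*
      Abelianization (FreeGroup (Fin n)) :=
    Abelianization.lift (PresentedGroup.toGroup (f := fun i => Abelianization.of (FreeGroup.of i))
      (by rintro r hr; rw [Set.mem_singleton_iff] at hr; subst hr
          exact lift_surfaceRelator _))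
  let ψ : Abelianization (FreeGroup (Fin n)) →*
      Abelianization (PresentedGroup {surfaceRelator g}) :=
    Abelianization.lift (FreeGroup.lift (fun i => Abelianization.of (PresentedGroup.of i)))
  have h1 : ψ.comp φ = MonoidHom.id _ := by
    apply Abelianization.hom_ext
    ext x
    simp [φ, ψ, PresentedGroup.toGroup.of]
  have h2 : φ.comp ψ = MonoidHom.id _ := by
    apply Abelianization.hom_ext
    ext x
    simp [φ, ψ, PresentedGroup.toGroup.of]
  exact ⟨(MonoidHom.toMulEquiv φ ψ h1 h2).trans
    (MulEquiv.multiplicativeAdditive (Abelianization (FreeGroup (Fin n)))).symm⟩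
end
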